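/- arXiv:math/0608251 — 2 statements merged into one kernel-verified Lean document; each statement's English description precedes it below -/
import Mathlib

section
/- (Maximal Ergodic Theorem) Let (X, ℬ, μ) be a probability space, T : X → X a measure-preserving transformation, f ∈ L¹(μ), and c ∈ ℝ a constant. Then ∫_{{f* > c}} (f − c) dμ ≥ 0, where f* = sup_{k≥1} A_k f is the maximal function of f. -/
/-!
Garsia's argument. Let `M_N = max_{0 ≤ n ≤ N} S_n g` be the running maximum of the Birkhoff
sums of `g`. On `{M_N > 0}` the maximum is attained at some `n ≥ 1`, so
`M_N = g + M_{N-1} ∘ T ≤ g + M_N ∘ T` there, while off that set `M_N - M_N ∘ T ≤ 0`. Hence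
`M_N - M_N ∘ T ≤ 1_{M_N > 0} g` everywhere, and integrating, `T`-invariance of `μ` gives
`∫_{M_N > 0} g ≥ 0`. Letting `N → ∞` and applying this to `g = f - c` gives the theorem, since
`A_k f > c` iff `S_k (f - c) > 0`.
-/

open MeasureTheory

section

variable {X : Type*} {T : X → X} {g : X → ℝ}

/-- `birkhoffMax T g N x = max_{0 ≤ n ≤ N} birkhoffSum T g n x`. -/
noncomputable def birkhoffMax (T : X → X) (g : X → ℝ) : ℕ → X → ℝ
  | 0 => fun _ => 0
  | N + 1 => fun x => max 0 (g x + birkhoffMax T g N (T x))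

theorem birkhoffSum_le_birkhoffMax {n N : ℕ} (h : n ≤ N) (x : X) :
    birkhoffSum T g n x ≤ birkhoffMax T g N x := by
  induction N generalizing n x with
  | zero => simp [Nat.le_zero.mp h, birkhoffMax, birkhoffSum_zero]
  | succ N ih =>
    cases n with
    | zero => exact (birkhoffSum_zero T g x).trans_le (le_max_left _ _)
    | succ n =>
      rw [birkhoffSum_succ']
      exact (add_le_add_right (ih (Nat.le_of_succ_le_succ h) (T x)) _).trans (le_max_right _ _)

theorem exists_birkhoffSum_eq_birkhoffMax (N : ℕ) (x : X) :
    ∃ n ≤ N, birkhoffMax T g N x = birkhoffSum T g n x := by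
  induction N generalizing x with
  | zero => exact ⟨0, le_rfl, (birkhoffSum_zero T g x).symm⟩
  | succ N ih =>
    rcases le_total (g x + birkhoffMax T g N (T x)) 0 with h | h
    · exact ⟨0, (N + 1).zero_le, by simp [birkhoffMax, max_eq_left h, birkhoffSum_zero]⟩
    · obtain ⟨n, hn, he⟩ := ih (T x)
      refine ⟨n + 1, Nat.succ_le_succ hn, ?_⟩
      rw [birkhoffSum_succ', ← he]
      exact max_eq_right h

theorem birkhoffMax_nonneg (N : ℕ) (x : X) : 0 ≤ birkhoffMax T g N x :=
  (birkhoffSum_zero T g x).symm.trans_le (birkhoffSum_le_birkhoffMax N.zero_le x)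

theorem birkhoffMax_mono {N K : ℕ} (h : N ≤ K) (x : X) :
    birkhoffMax T g N x ≤ birkhoffMax T g K x := by
  obtain ⟨n, hn, he⟩ := exists_birkhoffSum_eq_birkhoffMax (T := T) (g := g) N x
  exact he ▸ birkhoffSum_le_birkhoffMax (hn.trans h) x

theorem iUnion_birkhoffMax_pos :
    ⋃ N, {x | 0 < birkhoffMax T g N x} = {x | ∃ n, 1 ≤ n ∧ 0 < birkhoffSum T g n x} := by
  ext x
  simp only [Set.mem_iUnion, Set.mem_ofPred_eq]
  constructor
  · rintro ⟨N, hpos⟩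
    obtain ⟨n, -, he⟩ := exists_birkhoffSum_eq_birkhoffMax (T := T) (g := g) N x
    refine ⟨n, Nat.one_le_iff_ne_zero.mpr ?_, he ▸ hpos⟩
    rintro rfl
    simp [he, birkhoffSum_zero] at hpos
  · rintro ⟨n, -, hpos⟩
    exact ⟨n, hpos.trans_le (birkhoffSum_le_birkhoffMax le_rfl x)⟩

theorem birkhoffMax_sub_birkhoffMax_comp_le_indicator (N : ℕ) (x : X) :
    birkhoffMax T g N x - birkhoffMax T g N (T x) ≤
      {y | 0 < birkhoffMax T g N y}.indicator g x := by
  by_cases hx : 0 < birkhoffMax T g N x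
  · rw [Set.indicator_of_mem (show x ∈ {y | 0 < birkhoffMax T g N y} from hx)]
    cases N with
    | zero => simp [birkhoffMax] at hx
    | succ N =>
      have hMx : birkhoffMax T g (N + 1) x = g x + birkhoffMax T g N (T x) :=
        max_eq_right ((lt_max_iff.mp hx).resolve_left (lt_irrefl 0)).le
      linarith [birkhoffMax_mono (T := T) (g := g) N.le_succ (T x)]
  · rw [Set.indicator_of_notMem (show x ∉ {y | 0 < birkhoffMax T g N y} from hx)]
    linarith [birkhoffMax_nonneg (T := T) (g := g) N (T x)]

theorem lt_birkhoffAverage_iff_pos_birkhoffSum_sub {f : X → ℝ} {c : ℝ} {k : ℕ} (hk : 1 ≤ k)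
    (x : X) : c < birkhoffAverage ℝ T f k x ↔ 0 < birkhoffSum T (fun y => f y - c) k x := by
  have hk₀ : (0 : ℝ) < k := by exact_mod_cast hk
  have hsum : birkhoffSum T (fun y => f y - c) k x = birkhoffSum T f k x - k * c := by
    simp [birkhoffSum, Finset.sum_sub_distrib]
  rw [hsum, sub_pos, birkhoffAverage, smul_eq_mul, lt_inv_mul_iff₀ hk₀]

variable [MeasurableSpace X] {μ : Measure X}

theorem integrable_birkhoffMax (hT : MeasurePreserving T μ μ) (hg : Integrable g μ) (N : ℕ) :
    Integrable (birkhoffMax T g N) μ := by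
  induction N with
  | zero => exact integrable_zero X ℝ μ
  | succ N ih => exact (integrable_zero X ℝ μ).sup (hg.add (hT.integrable_comp_of_integrable ih))

theorem nullMeasurableSet_birkhoffMax_pos (hT : MeasurePreserving T μ μ) (hg : Integrable g μ)
    (N : ℕ) : NullMeasurableSet {x | 0 < birkhoffMax T g N x} μ :=
  aestronglyMeasurable_const.nullMeasurableSet_lt (integrable_birkhoffMax hT hg N).1

theorem setIntegral_birkhoffMax_pos_nonneg (hT : MeasurePreserving T μ μ) (hg : Integrable g μ)
    (N : ℕ) : 0 ≤ ∫ x in {x | 0 < birkhoffMax T g N x}, g x ∂μ := by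
  set M := birkhoffMax T g N
  have hM : Integrable M μ := integrable_birkhoffMax hT hg N
  have hMT : Integrable (fun x => M (T x)) μ := hT.integrable_comp_of_integrable hM
  have hE : NullMeasurableSet {x | 0 < M x} μ := nullMeasurableSet_birkhoffMax_pos hT hg N
  have hinv : ∫ x, M (T x) ∂μ = ∫ x, M x ∂μ := by
    rw [← integral_map hT.aemeasurable (hT.map_eq.symm ▸ hM.1), hT.map_eq]
  calc 0 = ∫ x, (M x - M (T x)) ∂μ := by rw [integral_sub hM hMT, hinv, sub_self]
    _ ≤ ∫ x, {x | 0 < M x}.indicator g x ∂μ :=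
      integral_mono (hM.sub hMT) (hg.indicator₀ hE)
        (birkhoffMax_sub_birkhoffMax_comp_le_indicator N)
    _ = ∫ x in {x | 0 < M x}, g x ∂μ := integral_indicator₀ hE

theorem setIntegral_exists_birkhoffSum_pos_nonneg (hT : MeasurePreserving T μ μ)
    (hg : Integrable g μ) : 0 ≤ ∫ x in {x | ∃ n, 1 ≤ n ∧ 0 < birkhoffSum T g n x}, g x ∂μ := by
  have hmono : Monotone fun N => {x | 0 < birkhoffMax T g N x} :=
    fun N K h x hx => hx.trans_le (birkhoffMax_mono h x)
  have hlim := tendsto_setIntegral_of_monotone₀ (nullMeasurableSet_birkhoffMax_pos hT hg) hmono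
    hg.integrableOn
  rw [iUnion_birkhoffMax_pos] at hlim
  exact ge_of_tendsto' hlim (setIntegral_birkhoffMax_pos_nonneg hT hg)

end

/-- **Maximal Ergodic Theorem.**
If `T` preserves the probability measure `μ`, `f ∈ L¹(μ)`, and `c ∈ ℝ`, then
`∫_{f* > c} (f - c) dμ ≥ 0`, where `f* = sup_{k ≥ 1} A_k f` is the maximal function,
with `A_k f = (1/k) ∑_{j<k} f ∘ T^j`. -/
theorem maximal_ergodic_theorem
    {X : Type*} [MeasurableSpace X] (μ : Measure X) [IsProbabilityMeasure μ]
    (T : X → X) (hT : MeasurePreserving T μ μ)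
    (f : X → ℝ) (hf : Integrable f μ) (c : ℝ) :
    0 ≤ ∫ x in {x | ∃ k : ℕ, 1 ≤ k ∧ c < birkhoffAverage ℝ T f k x},
        (f x - c) ∂μ := by
  have hset : {x | ∃ k : ℕ, 1 ≤ k ∧ c < birkhoffAverage ℝ T f k x} =
      {x | ∃ k, 1 ≤ k ∧ 0 < birkhoffSum T (fun y => f y - c) k x} := by
    ext x
    exact exists_congr fun k => and_congr_right fun hk =>
      lt_birkhoffAverage_iff_pos_birkhoffSum_sub hk x
  rw [hset]
  exact setIntegral_exists_birkhoffSum_pos_nonneg hT (hf.sub (integrable_const c))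
end

section
/- Let (X, ℬ, μ) be a probability space, T : X → X a measure-preserving transformation, and f ∈ L¹(μ) with f ≥ 0 a.e. Then limsup_{k→∞} A_k f (a priori with values in [0, ∞]) is integrable, and ∫ (limsup_{k→∞} A_k f) dμ ≤ ∫ f dμ. -/
open MeasureTheory Filter Topology
open scoped ENNReal

/-!
Write `g x = limsup_k A_k f (x)` and `S_k f = k A_k f`. Since
`A_{k+1} f (x) ≤ f x / (k + 1) + A_k f (T x)`, the function `g` does not decrease along orbits.
For a truncation `m = min g n - ε` every point `x` has a time `k ≥ 1` with `k m(x) ≤ S_k f (x)`.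
Paying `n` at the points of the (small) set where no such time is `≤ N`, one cuts every orbit
segment of length `L` greedily into such stretches and gets `(L - N) m ≤ S_L (f + n 1_bad)`.
Integrating, `T` being measure preserving, and letting `L → ∞`, then `N → ∞`, `ε → 0` and
`n → ∞` gives `∫ g ≤ ∫ f`.
-/

noncomputable def birkhoffLimsup {X : Type*} (T : X → X) (f : X → ℝ) (x : X) : ℝ≥0∞ :=
  limsup (fun k => ENNReal.ofReal (birkhoffAverage ℝ T f k x)) atTop

theorem birkhoffSum_nonneg {X M : Type*} [AddCommMonoid M] [PartialOrder M]
    [IsOrderedAddMonoid M] {T : X → X} {f : X → M} (hf : 0 ≤ f) (n : ℕ) (x : X) :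
    0 ≤ birkhoffSum T f n x :=
  Finset.sum_nonneg fun _ _ => hf _

section Pointwise

variable {X : Type*} {T : X → X} {f : X → ℝ}

theorem birkhoffAverage_succ_le (hf : 0 ≤ f) (k : ℕ) (x : X) :
    birkhoffAverage ℝ T f (k + 1) x ≤ f x / (k + 1) + birkhoffAverage ℝ T f k (T x) := by
  rw [birkhoffAverage, birkhoffAverage, birkhoffSum_succ', smul_eq_mul, smul_eq_mul, mul_add,
    Nat.cast_succ, inv_mul_eq_div]
  rcases k.eq_zero_or_pos with rfl | hk
  · simp
  · have := birkhoffSum_nonneg (T := T) hf k (T x)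
    gcongr
    linarith

theorem birkhoffLimsup_le_birkhoffLimsup_apply (hf : 0 ≤ f) (x : X) :
    birkhoffLimsup T f x ≤ birkhoffLimsup T f (T x) := by
  have hvanish : Tendsto (fun k : ℕ => ENNReal.ofReal (f x / (k + 1))) atTop (𝓝 0) := by
    rw [← ENNReal.ofReal_zero]
    exact ENNReal.tendsto_ofReal (tendsto_const_div_atTop_nhds_zero_nat (f x) |>.comp
      (tendsto_add_atTop_nat 1) |>.congr fun k => by simp)
  calc birkhoffLimsup T f x
      = limsup (fun k => ENNReal.ofReal (birkhoffAverage ℝ T f (k + 1) x)) atTop :=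
        (limsup_nat_add _ 1).symm
    _ ≤ limsup ((fun k : ℕ => ENNReal.ofReal (f x / (k + 1))) +
          fun k => ENNReal.ofReal (birkhoffAverage ℝ T f k (T x))) atTop :=
        limsup_le_limsup (.of_forall fun k =>
          (ENNReal.ofReal_le_ofReal (birkhoffAverage_succ_le hf k x)).trans ENNReal.ofReal_add_le)
    _ = birkhoffLimsup T f (T x) := ENNReal.limsup_add_of_left_tendsto_zero hvanish _

theorem exists_mul_le_birkhoffSum_of_ofReal_lt_birkhoffLimsup {c : ℝ} {x : X}
    (hc : ENNReal.ofReal c < birkhoffLimsup T f x) :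
    ∃ k : ℕ, 1 ≤ k ∧ k * c ≤ birkhoffSum T f k x := by
  obtain ⟨k, hck, hk⟩ :=
    ((frequently_lt_of_lt_limsup (by isBoundedDefault) hc).and_eventually
      (eventually_ge_atTop 1)).exists
  have hk₀ : (0 : ℝ) < k := by exact_mod_cast hk
  exact ⟨k, hk, ((lt_inv_mul_iff₀ hk₀).1 (ENNReal.ofReal_lt_ofReal_iff'.1 hck).1).le⟩

-- Cut the orbit greedily into stretches of length `k ≤ N` on which `f` sums to at least
-- `k * m`; since `m` does not decrease along the orbit, the stretches add up.
theorem tsub_mul_le_birkhoffSum {m : X → ℝ} {N : ℕ} (hf : 0 ≤ f) (hm : 0 ≤ m)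
    (hmT : ∀ x, m x ≤ m (T x))
    (hstop : ∀ x, ∃ k, 1 ≤ k ∧ k ≤ N ∧ k * m x ≤ birkhoffSum T f k x) (L : ℕ) (x : X) :
    ((L - N : ℕ) : ℝ) * m x ≤ birkhoffSum T f L x := by
  induction L using Nat.strong_induction_on generalizing x with
  | _ L ih =>
  by_cases hLN : L ≤ N
  · simpa [Nat.sub_eq_zero_of_le hLN] using birkhoffSum_nonneg hf L x
  obtain ⟨k, hk, hkN, hkx⟩ := hstop x
  have hmk : m x ≤ m (T^[k] x) :=
    monotone_nat_of_le_succ (f := fun j => m (T^[j] x))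
      (fun j => by simpa only [Function.iterate_succ_apply'] using hmT _) (Nat.zero_le k)
  have hsplit : ((L - N : ℕ) : ℝ) ≤ k + ((L - k - N : ℕ) : ℝ) := by
    exact_mod_cast (by omega : L - N ≤ k + (L - k - N))
  calc ((L - N : ℕ) : ℝ) * m x ≤ k * m x + ((L - k - N : ℕ) : ℝ) * m x := by
        simpa only [add_mul] using mul_le_mul_of_nonneg_right hsplit (hm x)
    _ ≤ birkhoffSum T f k x + birkhoffSum T f (L - k) (T^[k] x) := by
        gcongr
        exact (mul_le_mul_of_nonneg_left hmk (Nat.cast_nonneg _)).trans (ih _ (by omega) _)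
    _ = birkhoffSum T f L x := by rw [← birkhoffSum_add, Nat.add_sub_cancel' (by omega)]

end Pointwise

theorem le_of_forall_tsub_mul_le {a b : ℝ} {N : ℕ} (h : ∀ L : ℕ, ((L - N : ℕ) : ℝ) * a ≤ L * b) :
    a ≤ b := by
  by_contra! hba
  obtain ⟨j, hj⟩ := exists_nat_gt (N * b / (a - b))
  have := h (N + j)
  rw [Nat.add_sub_cancel_left, Nat.cast_add] at this
  rw [div_lt_iff₀ (by linarith)] at hj
  nlinarith

section Measure

variable {X : Type*} [MeasurableSpace X] {μ : Measure X} {T : X → X}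

theorem Measurable.birkhoffSum {M : Type*} [AddCommMonoid M] [MeasurableSpace M]
    [MeasurableAdd₂ M] {f : X → M} (hf : Measurable f) (hT : Measurable T) (n : ℕ) :
    Measurable (birkhoffSum T f n) :=
  Finset.measurable_sum _ fun i _ => hf.comp (hT.iterate i)

section Integral

variable {E : Type*} [NormedAddCommGroup E] {f : X → E}

theorem MeasureTheory.Integrable.birkhoffSum (hf : Integrable f μ)
    (hT : MeasurePreserving T μ μ) (n : ℕ) : Integrable (birkhoffSum T f n) μ :=
  integrable_finsetSum _ fun i _ => (hT.iterate i).integrable_comp_of_integrable hf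

theorem MeasureTheory.MeasurePreserving.integral_birkhoffSum [NormedSpace ℝ E]
    (hT : MeasurePreserving T μ μ) (hf : Integrable f μ) (n : ℕ) :
    ∫ x, birkhoffSum T f n x ∂μ = n • ∫ x, f x ∂μ := by
  have hinv : ∀ i, ∫ x, f (T^[i] x) ∂μ = ∫ x, f x ∂μ := fun i => by
    rw [← integral_map (hT.iterate i).aemeasurable (by rw [(hT.iterate i).map_eq]; exact hf.1),
      (hT.iterate i).map_eq]
  have hcomp : ∀ i, Integrable (fun x => f (T^[i] x)) μ := fun i =>
    (hT.iterate i).integrable_comp_of_integrable hf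
  simp only [birkhoffSum]
  rw [integral_finsetSum _ fun i _ => hcomp i, Finset.sum_congr rfl fun i _ => hinv i,
    Finset.sum_const, Finset.card_range]

end Integral

variable {f : X → ℝ}

theorem Measurable.birkhoffLimsup (hf : Measurable f) (hT : Measurable T) :
    Measurable (birkhoffLimsup T f) :=
  .limsup fun k => ENNReal.measurable_ofReal.comp ((hf.birkhoffSum hT k).const_smul (k : ℝ)⁻¹)

theorem integral_le_integral_add_measureReal_compl_mul [IsFiniteMeasure μ]
    (hT : MeasurePreserving T μ μ) (hf : Integrable f μ) (hf₀ : 0 ≤ f)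
    {m : X → ℝ} {C : ℝ} {N : ℕ} (hm : Integrable m μ) (hm₀ : 0 ≤ m) (hmC : ∀ x, m x ≤ C)
    (hmT : ∀ x, m x ≤ m (T x)) {E : Set X} (hE : MeasurableSet E)
    (hstop : ∀ x ∈ E, ∃ k, 1 ≤ k ∧ k ≤ N ∧ k * m x ≤ birkhoffSum T f k x) :
    ∫ x, m x ∂μ ≤ ∫ x, f x ∂μ + μ.real Eᶜ * C := by
  -- Outside `E`, add `C` to `f` so that one step of the orbit already beats `m`.
  set F := f + Eᶜ.indicator fun _ => C
  have hfF : f ≤ F := fun x =>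
    le_add_of_nonneg_right <| Set.indicator_nonneg (fun y _ => (hm₀ y).trans (hmC y)) x
  have hFi : Integrable F μ := hf.add ((integrable_const C).indicator hE.compl)
  have hstopF : ∀ x, ∃ k, 1 ≤ k ∧ k ≤ N + 1 ∧ k * m x ≤ birkhoffSum T F k x := by
    intro x
    by_cases hx : x ∈ E
    · obtain ⟨k, hk, hkN, hkx⟩ := hstop x hx
      exact ⟨k, hk, hkN.trans N.le_succ,
        hkx.trans (Finset.sum_le_sum fun i _ => hfF _)⟩
    · refine ⟨1, le_rfl, Nat.le_add_left 1 N, ?_⟩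
      simpa [F, birkhoffSum_one, Set.indicator_of_mem (Set.mem_compl hx)] using
        (hmC x).trans (le_add_of_nonneg_left (hf₀ x))
  have hL : ∀ L : ℕ, ((L - (N + 1) : ℕ) : ℝ) * ∫ x, m x ∂μ ≤ L * ∫ x, F x ∂μ := fun L => by
    rw [← integral_const_mul, ← nsmul_eq_mul, ← hT.integral_birkhoffSum hFi]
    exact integral_mono (hm.const_mul _) (hFi.birkhoffSum hT L)
      (tsub_mul_le_birkhoffSum (hf₀.trans hfF) hm₀ hmT hstopF L)
  have hFint : ∫ x, F x ∂μ = ∫ x, f x ∂μ + μ.real Eᶜ * C := by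
    rw [integral_add' hf ((integrable_const C).indicator hE.compl),
      integral_indicator_const C hE.compl, smul_eq_mul]
  exact hFint ▸ le_of_forall_tsub_mul_le hL

theorem integral_le_integral_of_forall_exists_mul_le_birkhoffSum [IsFiniteMeasure μ]
    (hT : MeasurePreserving T μ μ) (hfm : Measurable f) (hf : Integrable f μ) (hf₀ : 0 ≤ f)
    {m : X → ℝ} {C : ℝ} (hmm : Measurable m) (hm₀ : 0 ≤ m) (hmC : ∀ x, m x ≤ C)
    (hmT : ∀ x, m x ≤ m (T x)) (hstop : ∀ x, ∃ k, 1 ≤ k ∧ k * m x ≤ birkhoffSum T f k x) :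
    ∫ x, m x ∂μ ≤ ∫ x, f x ∂μ := by
  set E : ℕ → Set X := fun N => ⋃ k ∈ Finset.Icc 1 N, {x | k * m x ≤ birkhoffSum T f k x}
  have hE : ∀ N, MeasurableSet (E N) := fun N => Finset.measurableSet_biUnion _ fun k _ =>
    measurableSet_le (hmm.const_mul _) (hfm.birkhoffSum hT.measurable k)
  have hm : Integrable m μ := .of_bound hmm.aestronglyMeasurable C
    (.of_forall fun x => (Real.norm_of_nonneg (hm₀ x)).trans_le (hmC x))
  have hbound : ∀ N, ∫ x, m x ∂μ ≤ ∫ x, f x ∂μ + μ.real (E N)ᶜ * C := fun N =>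
    integral_le_integral_add_measureReal_compl_mul (N := N) hT hf hf₀ hm hm₀ hmC hmT (hE N)
      fun x hx => by simpa [E, and_assoc] using hx
  have hEc : Tendsto (fun N => μ.real (E N)ᶜ) atTop (𝓝 0) := by
    have hanti : Antitone fun N => (E N)ᶜ := fun N N' h => Set.compl_subset_compl.2 <|
      Set.biUnion_subset_biUnion_left (Finset.coe_subset.2 (Finset.Icc_subset_Icc_right h))
    have hempty : ⋂ N, (E N)ᶜ = ∅ := by
      simp only [← Set.compl_iUnion, Set.compl_empty_iff, Set.eq_univ_iff_forall, Set.mem_iUnion]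
      intro x
      obtain ⟨k, hk, hkx⟩ := hstop x
      exact ⟨k, by simpa [E] using ⟨k, ⟨hk, le_rfl⟩, hkx⟩⟩
    have := tendsto_measure_iInter_atTop (fun N => (hE N).compl.nullMeasurableSet) hanti
      ⟨0, measure_ne_top μ _⟩
    rw [hempty, measure_empty] at this
    exact (ENNReal.tendsto_toReal ENNReal.zero_ne_top).comp this
  exact ge_of_tendsto (by simpa using (hEc.mul_const C).const_add (∫ x, f x ∂μ))
    (.of_forall hbound)

theorem lintegral_min_birkhoffLimsup_le [IsProbabilityMeasure μ] (hT : MeasurePreserving T μ μ)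
    (hfm : Measurable f) (hf : Integrable f μ) (hf₀ : 0 ≤ f) (n : ℕ) :
    ∫⁻ x, min (birkhoffLimsup T f x) n ∂μ ≤ ENNReal.ofReal (∫ x, f x ∂μ) := by
  refine ENNReal.le_of_forall_pos_le_add fun ε hε _ => ?_
  -- Lowering the truncation by `ε` makes it strictly smaller than the limsup wherever positive.
  set h : X → ℝ≥0∞ := fun x => min (birkhoffLimsup T f x) n - ε
  have hle : ∀ x, h x ≤ n := fun x => tsub_le_self.trans (min_le_right _ _)
  have hne : ∀ x, h x ≠ ∞ := fun x => ne_top_of_le_ne_top (ENNReal.natCast_ne_top n) (hle x)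
  have hle_real : ∀ x, (h x).toReal ≤ n := fun x => by
    simpa using ENNReal.toReal_mono (ENNReal.natCast_ne_top n) (hle x)
  have hhm : Measurable fun x => (h x).toReal :=
    (((hfm.birkhoffLimsup hT.measurable).min measurable_const).sub_const _).ennreal_toReal
  have hhi : Integrable (fun x => (h x).toReal) μ := .of_bound hhm.aestronglyMeasurable n
    (.of_forall fun x => (Real.norm_of_nonneg ENNReal.toReal_nonneg).trans_le (hle_real x))
  have hstop : ∀ x, ∃ k, 1 ≤ k ∧ k * (h x).toReal ≤ birkhoffSum T f k x := by
    intro x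
    rcases eq_or_ne (h x) 0 with hx | hx
    · exact ⟨1, le_rfl, by simpa [hx] using hf₀ x⟩
    refine exists_mul_le_birkhoffSum_of_ofReal_lt_birkhoffLimsup ?_
    rw [ENNReal.ofReal_toReal (hne x)]
    exact (ENNReal.sub_lt_self (ne_top_of_le_ne_top (ENNReal.natCast_ne_top n) (min_le_right _ _))
      (fun h0 => hx (by simp [h, h0])) (by positivity)).trans_le (min_le_left _ _)
  have hint : ∫ x, (h x).toReal ∂μ ≤ ∫ x, f x ∂μ :=
    integral_le_integral_of_forall_exists_mul_le_birkhoffSum hT hfm hf hf₀ hhm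
      (fun x => ENNReal.toReal_nonneg) hle_real
      (fun x => ENNReal.toReal_mono (hne _) <| tsub_le_tsub_right
        (min_le_min_right _ (birkhoffLimsup_le_birkhoffLimsup_apply hf₀ x)) _) hstop
  calc ∫⁻ x, min (birkhoffLimsup T f x) n ∂μ ≤ ∫⁻ x, h x + ε ∂μ :=
        lintegral_mono fun x => le_tsub_add
    _ = ENNReal.ofReal (∫ x, (h x).toReal ∂μ) + ε := by
        rw [lintegral_add_right _ measurable_const, lintegral_const, measure_univ, mul_one,
          ofReal_integral_eq_lintegral_ofReal hhi (.of_forall fun x => ENNReal.toReal_nonneg)]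
        simp only [ENNReal.ofReal_toReal (hne _)]
    _ ≤ ENNReal.ofReal (∫ x, f x ∂μ) + ε := by gcongr

theorem lintegral_birkhoffLimsup_le [IsProbabilityMeasure μ] (hT : MeasurePreserving T μ μ)
    (hfm : Measurable f) (hf : Integrable f μ) (hf₀ : 0 ≤ f) :
    ∫⁻ x, birkhoffLimsup T f x ∂μ ≤ ENNReal.ofReal (∫ x, f x ∂μ) := by
  have hsup : ∀ x, birkhoffLimsup T f x = ⨆ n : ℕ, min (birkhoffLimsup T f x) n := fun x => by
    rw [← inf_iSup_eq, ENNReal.iSup_natCast, inf_top_eq]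
  calc ∫⁻ x, birkhoffLimsup T f x ∂μ = ∫⁻ x, ⨆ n : ℕ, min (birkhoffLimsup T f x) n ∂μ :=
        lintegral_congr hsup
    _ = ⨆ n : ℕ, ∫⁻ x, min (birkhoffLimsup T f x) n ∂μ :=
        lintegral_iSup (fun n => (hfm.birkhoffLimsup hT.measurable).min measurable_const)
          fun _ _ h x => min_le_min_left _ (Nat.cast_le.2 h)
    _ ≤ ENNReal.ofReal (∫ x, f x ∂μ) := iSup_le (lintegral_min_birkhoffLimsup_le hT hfm hf hf₀)

theorem birkhoffLimsup_ae_eq_of_ae_eq {g : X → ℝ} (hT : Measure.QuasiMeasurePreserving T μ μ)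
    (hfg : f =ᵐ[μ] g) : birkhoffLimsup T f =ᵐ[μ] birkhoffLimsup T g := by
  filter_upwards [ae_all_iff.2 fun k => hT.birkhoffAverage_ae_eq_of_ae_eq ℝ hfg k] with x hx
  simp only [birkhoffLimsup, hx]

end Measure

/-- If `T` preserves the probability measure `μ` and `f ∈ L¹(μ)` is a.e. nonnegative,
then `limsup_{k→∞} A_k f`, a priori with values in `[0, ∞]`, is integrable and its
integral is at most `∫ f dμ`. -/
theorem limsup_birkhoffAverage_nonneg_le
    {X : Type*} [MeasurableSpace X] (μ : Measure X) [IsProbabilityMeasure μ]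
    (T : X → X) (hT : MeasurePreserving T μ μ)
    (f : X → ℝ) (hf : Integrable f μ) (hf_nonneg : 0 ≤ᵐ[μ] f) :
    ∫⁻ x, limsup (fun k => ENNReal.ofReal (birkhoffAverage ℝ T f k x)) atTop ∂μ ≠ ⊤ ∧
    ∫⁻ x, limsup (fun k => ENNReal.ofReal (birkhoffAverage ℝ T f k x)) atTop ∂μ
      ≤ ENNReal.ofReal (∫ x, f x ∂μ) := by
  obtain ⟨g, hgm, hg₀, hfg⟩ := hf.aemeasurable.exists_measurable_nonneg hf_nonneg
  have key := lintegral_birkhoffLimsup_le hT hgm (hf.congr hfg) hg₀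
  rw [← integral_congr_ae hfg,
    ← lintegral_congr_ae (birkhoffLimsup_ae_eq_of_ae_eq hT.quasiMeasurePreserving hfg)] at key
  exact ⟨ne_top_of_le_ne_top ENNReal.ofReal_ne_top key, key⟩
end
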